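/- arXiv:1204.5338 — 6 statements merged into one kernel-verified Lean document; each statement's English description precedes it below -/
import Mathlib

section
/- A directed-complete partial order endowed with the Scott topology is scattered if and only if it contains no infinite strictly ascending chain x₀ < x₁ < x₂ < ⋯. -/
/-- A set is Scott open: it is upward closed and every nonempty directed set whose
supremum lies in it meets it. -/
def ScottOpen {X : Type*} [Preorder X] (U : Set X) : Prop :=
  IsUpperSet U ∧ ∀ d : Set X, d.Nonempty → DirectedOn (· ≤ ·) d →
    ∀ a : X, IsLUB d a → a ∈ U → (d ∩ U).Nonempty

/-- A topological space is scattered iff every nonempty subset has a point isolated in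
the subspace topology. -/
def IsScatteredSpace (X : Type*) [TopologicalSpace X] : Prop :=
  ∀ S : Set X, S.Nonempty → ∃ x ∈ S, ∃ U : Set X, IsOpen U ∧ U ∩ S = {x}

/-- A dcpo endowed with the Scott topology is scattered if and only if it contains
no infinite strictly ascending chain. -/
theorem dcpo_scattered_iff_no_ascending_chain {X : Type*} [PartialOrder X]
    [TopologicalSpace X]
    (hdcpo : ∀ d : Set X, d.Nonempty → DirectedOn (· ≤ ·) d → ∃ a : X, IsLUB d a)
    (hscott : ∀ U : Set X, IsOpen U ↔ ScottOpen U) :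
    IsScatteredSpace X ↔ ¬ ∃ f : ℕ → X, StrictMono f := by
  constructor
  · rintro hscat ⟨f, hf⟩
    -- the chain is directed
    have hdir : DirectedOn (· ≤ ·) (Set.range f) := by
      rintro _ ⟨i, rfl⟩ _ ⟨j, rfl⟩
      exact ⟨f (max i j), ⟨max i j, rfl⟩, hf.monotone (le_max_left i j),
        hf.monotone (le_max_right i j)⟩
    obtain ⟨a, ha⟩ := hdcpo (Set.range f) ⟨f 0, 0, rfl⟩ hdir
    have hfa : ∀ n, f n < a := fun n =>
      lt_of_lt_of_le (hf (Nat.lt_succ_self n)) (ha.1 ⟨n + 1, rfl⟩)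
    obtain ⟨x, hxS, U, hU, hUS⟩ := hscat (insert a (Set.range f)) ⟨a, Set.mem_insert _ _⟩
    have hxU : x ∈ U := by
      have : x ∈ U ∩ insert a (Set.range f) := by rw [hUS]; exact rfl
      exact this.1
    rw [hscott] at hU
    rcases hxS with rfl | ⟨n, rfl⟩
    · -- x = a : U must meet the chain
      obtain ⟨y, ⟨n, rfl⟩, hyU⟩ := hU.2 (Set.range f) ⟨f 0, 0, rfl⟩ hdir x ha hxU
      have : f n ∈ U ∩ insert x (Set.range f) := ⟨hyU, Set.mem_insert_iff.2 (Or.inr ⟨n, rfl⟩)⟩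
      rw [hUS] at this
      exact absurd this (ne_of_lt (hfa n))
    · -- x = f n : f (n+1) is also in U ∩ S
      have h1 : f (n + 1) ∈ U := hU.1 (hf (Nat.lt_succ_self n)).le hxU
      have : f (n + 1) ∈ U ∩ insert a (Set.range f) :=
        ⟨h1, Set.mem_insert_iff.2 (Or.inr ⟨n + 1, rfl⟩)⟩
      rw [hUS] at this
      exact absurd this.symm (ne_of_lt (hf (Nat.lt_succ_self n)))
  · intro h
    -- `>` is well-founded
    have wf : WellFounded ((· > ·) : X → X → Prop) := by
      rw [RelEmbedding.wellFounded_iff_isEmpty]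
      constructor
      intro e
      exact h ⟨fun n => e n, fun m n hmn => e.map_rel_iff.2 hmn⟩
    -- every nonempty directed set has a greatest element
    have hmax : ∀ d : Set X, d.Nonempty → DirectedOn (· ≤ ·) d →
        ∃ m ∈ d, ∀ x ∈ d, x ≤ m := by
      intro d hd hdir
      obtain ⟨m, hm, hmin⟩ := wf.has_min d hd
      refine ⟨m, hm, fun x hx => ?_⟩
      obtain ⟨z, hz, hmz, hxz⟩ := hdir m hm x hx
      have hzm : m = z := eq_of_le_of_not_lt hmz (hmin z hz)
      exact le_trans hxz hzm.ge
    -- every upper set is open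
    have hopen : ∀ U : Set X, IsUpperSet U → IsOpen U := by
      intro U hup
      rw [hscott]
      refine ⟨hup, fun d hd hdir a ha haU => ?_⟩
      obtain ⟨m, hm, hmub⟩ := hmax d hd hdir
      have ham : a = m := le_antisymm (ha.2 hmub) (ha.1 hm)
      exact ⟨m, hm, ham ▸ haU⟩
    intro S hS
    obtain ⟨m, hm, hmin⟩ := wf.has_min S hS
    refine ⟨m, hm, Set.Ici m, hopen _ fun a b hab ha => le_trans ha hab, ?_⟩
    ext y
    constructor
    · rintro ⟨hy1, hy2⟩
      exact (eq_of_le_of_not_lt hy1 (hmin y hy2)).symm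
    · rintro rfl
      exact ⟨le_refl y, hm⟩
end

section
/- In any scattered dcpo with the Scott topology, the Scott topology coincides with the Alexandrov topology (the topology of all upward closed sets), and consequently the continuous functions between scattered dcpos coincide with the monotone functions. -/
/-- In a scattered space whose opens are the Scott opens, every nonempty directed
set contains its supremum. -/
theorem scattered_lub_mem {X : Type*} [PartialOrder X] [TopologicalSpace X]
    (hscott : ∀ U : Set X, IsOpen U ↔ ScottOpen U)
    (hsct : IsScatteredSpace X)
    {d : Set X} (hne : d.Nonempty) (hdir : DirectedOn (· ≤ ·) d)
    {a : X} (ha : IsLUB d a) : a ∈ d := by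
  obtain ⟨x, hxS, U, hU, hUS⟩ := hsct (insert a d) ⟨a, Set.mem_insert _ _⟩
  have hSU := (hscott U).mp hU
  rcases hxS with rfl | hxd
  · have hxU : x ∈ U := by
      have : x ∈ ({x} : Set X) := rfl
      rw [← hUS] at this; exact this.1
    obtain ⟨y, hyd, hyU⟩ := hSU.2 d hne hdir x ha hxU
    have : y ∈ U ∩ insert x d := ⟨hyU, Set.mem_insert_of_mem _ hyd⟩
    rw [hUS] at this
    rwa [Set.mem_singleton_iff.mp this] at hyd
  · have hxU : x ∈ U := by
      have : x ∈ ({x} : Set X) := rfl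
      rw [← hUS] at this; exact this.1
    have haU : a ∈ U := hSU.1 (ha.1 hxd) hxU
    have : a ∈ U ∩ insert a d := ⟨haU, Set.mem_insert _ _⟩
    rw [hUS] at this
    rwa [Set.mem_singleton_iff.mp this]

/-- In a scattered Scott space, opens = upper sets. -/
theorem scattered_open_iff_upper {X : Type*} [PartialOrder X] [TopologicalSpace X]
    (hscott : ∀ U : Set X, IsOpen U ↔ ScottOpen U)
    (hsct : IsScatteredSpace X) (U : Set X) : IsOpen U ↔ IsUpperSet U := by
  rw [hscott]
  constructor
  · exact fun h => h.1
  · intro hU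
    exact ⟨hU, fun d hne hdir a ha haU =>
      ⟨a, scattered_lub_mem hscott hsct hne hdir ha, haU⟩⟩

/-- In any scattered dcpo with the Scott topology, the Scott topology coincides with
the Alexandrov topology (the opens are exactly the upward closed sets), and the
continuous functions between scattered dcpos coincide with the monotone functions. -/
theorem scattered_dcpo_scott_eq_alexandrov {X Y : Type*}
    [PartialOrder X] [TopologicalSpace X] [PartialOrder Y] [TopologicalSpace Y]
    (hdcpoX : ∀ d : Set X, d.Nonempty → DirectedOn (· ≤ ·) d → ∃ a : X, IsLUB d a)
    (hscottX : ∀ U : Set X, IsOpen U ↔ ScottOpen U)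
    (hdcpoY : ∀ d : Set Y, d.Nonempty → DirectedOn (· ≤ ·) d → ∃ a : Y, IsLUB d a)
    (hscottY : ∀ U : Set Y, IsOpen U ↔ ScottOpen U)
    (hsctX : IsScatteredSpace X) (hsctY : IsScatteredSpace Y) :
    (∀ U : Set X, IsOpen U ↔ IsUpperSet U) ∧
    (∀ f : X → Y, Continuous f ↔ Monotone f) := by
  have hX := scattered_open_iff_upper hscottX hsctX
  have hY := scattered_open_iff_upper hscottY hsctY
  refine ⟨hX, fun f => ⟨?_, ?_⟩⟩
  · intro hf x y hxy
    by_contra hne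
    have hV : IsOpen {z : Y | ¬ z ≤ f y} :=
      (hY _).mpr (fun u v huv hu hle => hu (huv.trans hle))
    have := ((hX _).mp (hf.isOpen_preimage _ hV)) hxy hne
    exact this le_rfl
  · intro hf
    rw [continuous_def]
    intro V hV
    exact (hX _).mpr (((hY V).mp hV).preimage hf)
end

section
/- Let X, Y be topological spaces and let 1 ≤ α, β be countable ordinals with δ = max{α,β}·ω (the least additively closed ordinal strictly above both). If f : X → Y is such that the preimage of every Σ⁰_β set is Σ⁰_α, then for every γ < δ the preimage under f of every Σ⁰_γ set is Σ⁰_{γ'} for some γ' < δ; that is, f is Σ⁰_{<δ}-measurable with respect to the whole hierarchy below δ. -/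
/-!
Induction on the construction of a `Σ⁰_γ` set shows that its preimage is `Σ⁰_{α+γ}`: open
sets pull back into `Σ⁰_α`, and each further step of the hierarchy costs at most one extra
level on the left of `γ`. Since `m * ω` is the least fixed point of `m + ·` above `0`, it is
closed under adding `α ≤ m` on the left, so `α + γ < max α β * ω` whenever
`γ < max α β * ω`.
-/

open Ordinal

/-- The Borel pointclasses `Σ⁰_α(X)` for an arbitrary topological space `X`:
`Σ⁰₁` is the class of open sets, `Σ⁰₂` is the class of countable unions of
differences of open sets, and for `α > 2`, `Σ⁰_α` is the class of countable
unions of complements of sets from levels `β < α`. -/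
inductive SigmaLev {X : Type*} [TopologicalSpace X] : Ordinal.{0} → Set X → Prop
  | open_ {U : Set X} (h : IsOpen U) : SigmaLev 1 U
  | diff (f g : ℕ → Set X) (hf : ∀ n, IsOpen (f n)) (hg : ∀ n, IsOpen (g n)) :
      SigmaLev 2 (⋃ n, f n \ g n)
  | union {α : Ordinal} (hα : 2 < α) (β : ℕ → Ordinal) (hβ : ∀ n, β n < α)
      (A : ℕ → Set X) (h : ∀ n, SigmaLev (β n) (A n)ᶜ) : SigmaLev α (⋃ n, A n)

theorem Ordinal.add_lt_mul_omega0 {a b c : Ordinal} (ha : a ≤ c) (hb : b < c * ω) :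
    a + b < c * ω := by
  rw [← nfp_add_zero] at hb ⊢
  exact (add_le_add_left ha b).trans_lt ((apply_lt_nfp (isNormal_add_right c)).2 hb)

namespace SigmaLev

variable {X : Type*} [TopologicalSpace X]

theorem of_compl {γ₀ γ : Ordinal} {A : Set X} (h2 : 2 < γ) (hlt : γ₀ < γ)
    (h : SigmaLev γ₀ Aᶜ) : SigmaLev γ A := by
  simpa only [Set.iUnion_const] using
    SigmaLev.union h2 (fun _ => γ₀) (fun _ => hlt) (fun _ : ℕ => A) fun _ => h

theorem two_of_isOpen {U : Set X} (hU : IsOpen U) : SigmaLev 2 U := by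
  simpa only [Set.sdiff_empty, Set.iUnion_const] using
    SigmaLev.diff (fun _ => U) (fun _ => ∅) (fun _ => hU) fun _ => isOpen_empty

theorem two_of_isClosed {F : Set X} (hF : IsClosed F) : SigmaLev 2 F := by
  simpa [Set.iUnion_const] using
    SigmaLev.diff (fun _ => Set.univ) (fun _ => Fᶜ) (fun _ => isOpen_univ)
      fun _ => hF.isOpen_compl

theorem exists_iUnion_diff_of_two {A : Set X} (h : SigmaLev 2 A) :
    ∃ F G : ℕ → Set X, (∀ n, IsOpen (F n)) ∧ (∀ n, IsOpen (G n)) ∧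
      A = ⋃ n, F n \ G n := by
  generalize hγ : (2 : Ordinal) = γ at h
  cases h with
  | open_ => exact absurd hγ (by norm_num)
  | diff F G hF hG => exact ⟨F, G, hF, hG, rfl⟩
  | union h2 => exact absurd (hγ ▸ h2) (lt_irrefl _)

theorem exists_iUnion_compl_of_two_lt {γ : Ordinal} {A : Set X} (h : SigmaLev γ A)
    (hγ : 2 < γ) : ∃ (β : ℕ → Ordinal) (B : ℕ → Set X), (∀ n, β n < γ) ∧
      (∀ n, SigmaLev (β n) (B n)ᶜ) ∧ A = ⋃ n, B n := by
  cases h with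
  | open_ => exact absurd hγ (by norm_num)
  | diff => exact absurd hγ (lt_irrefl _)
  | union _ β hβ B hB => exact ⟨β, B, hβ, hB, rfl⟩

theorem iUnion {γ : Ordinal} {A : ℕ → Set X} (hγ : 2 ≤ γ) (hA : ∀ n, SigmaLev γ (A n)) :
    SigmaLev γ (⋃ n, A n) := by
  rcases hγ.eq_or_lt with rfl | hγ
  · choose F G hF hG hFG using fun n => (hA n).exists_iUnion_diff_of_two
    simp_rw [hFG, ← Set.iUnion_unpair]
    exact .diff _ _ (fun _ => hF _ _) fun _ => hG _ _
  · choose β B hβ hB hAB using fun n => (hA n).exists_iUnion_compl_of_two_lt hγ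
    simp_rw [hAB, ← Set.iUnion_unpair]
    exact .union hγ _ (fun _ => hβ _ _) _ fun _ => hB _ _

theorem union_of_two_le {γ : Ordinal} {A B : Set X} (hγ : 2 ≤ γ) (hA : SigmaLev γ A)
    (hB : SigmaLev γ B) : SigmaLev γ (A ∪ B) := by
  have h := Set.union_iUnion_nat_succ fun n => if n = 0 then A else B
  simp only [if_pos, Nat.add_one_ne_zero, if_false, Set.iUnion_const] at h
  rw [h]
  exact iUnion hγ fun n => by split_ifs <;> assumption

theorem mono {γ γ' : Ordinal} {A : Set X} (h : SigmaLev γ A) (hle : γ ≤ γ') :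
    SigmaLev γ' A := by
  rcases hle.eq_or_lt with rfl | hlt
  · exact h
  cases h with
  | open_ hU =>
    have h2 : (2 : Ordinal) ≤ γ' := by
      simpa [one_add_one_eq_two] using Order.add_one_le_of_lt hlt
    rcases h2.eq_or_lt with rfl | h2
    · exact two_of_isOpen hU
    · exact of_compl h2 h2 (two_of_isClosed hU.isClosed_compl)
  | diff F G hF hG =>
    refine .union hlt _ (fun _ => hlt) _ fun n => ?_
    rw [Set.compl_sdiff]
    exact union_of_two_le le_rfl (two_of_isOpen (hG n)) (two_of_isClosed (hF n).isClosed_compl)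
  | union h2 β hβ B hB => exact .union (h2.trans hlt) β (fun n => (hβ n).trans hlt) B hB

theorem compl_add_one {γ : Ordinal} {A : Set X} (h : SigmaLev γ A) : SigmaLev (γ + 1) Aᶜ := by
  cases h with
  | open_ hU => rw [one_add_one_eq_two]; exact two_of_isClosed hU.isClosed_compl
  | diff F G hF hG =>
    exact of_compl (lt_add_one 2) (lt_add_one 2) (by rw [compl_compl]; exact .diff F G hF hG)
  | union h2 β hβ B hB =>
    exact of_compl (h2.trans (lt_add_one _)) (lt_add_one _)
      (by rw [compl_compl]; exact .union h2 β hβ B hB)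

theorem preimage_add {Y : Type*} [TopologicalSpace Y] {f : X → Y} {α : Ordinal} (hα : 1 ≤ α)
    (hf : ∀ U, IsOpen U → SigmaLev α (f ⁻¹' U)) {γ : Ordinal} {A : Set Y}
    (hA : SigmaLev γ A) : SigmaLev (α + γ) (f ⁻¹' A) := by
  induction hA with
  | open_ hU => exact (hf _ hU).mono le_self_add
  | diff F G hF hG =>
    have h2 : (2 : Ordinal) ≤ α + 1 := by
      rw [← one_add_one_eq_two]; exact add_le_add_left hα 1
    have h12 : α + 1 < α + 2 := add_lt_add_right one_lt_two α
    rw [Set.preimage_iUnion]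
    refine .union (h2.trans_lt h12) _ (fun _ => h12) _ fun n => ?_
    rw [Set.preimage_sdiff, Set.compl_sdiff]
    exact union_of_two_le h2 ((hf _ (hG n)).mono le_self_add) (hf _ (hF n)).compl_add_one
  | union h2 β hβ B _ ih =>
    rw [Set.preimage_iUnion]
    exact .union (h2.trans_le le_add_self) _ (fun n => add_lt_add_right (hβ n) α) _ ih

end SigmaLev

theorem sigma_measurable_below_delta_general {X Y : Type*} [TopologicalSpace X]
    [TopologicalSpace Y] (α β : Ordinal) (hα : 1 ≤ α) (hβ : 1 ≤ β) (f : X → Y)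
    (hf : ∀ A : Set Y, SigmaLev β A → SigmaLev α (f ⁻¹' A)) :
    ∀ γ < max α β * ω, ∀ A : Set Y, SigmaLev γ A →
      ∃ γ' < max α β * ω, SigmaLev γ' (f ⁻¹' A) := fun γ hγ _ hA =>
  ⟨α + γ, add_lt_mul_omega0 (le_max_left α β) hγ,
    hA.preimage_add hα fun U hU => hf U ((SigmaLev.open_ hU).mono hβ)⟩

/-- If the preimage under `f` of every `Σ⁰_β` set is `Σ⁰_α` (for countable ordinals
`α, β ≥ 1`), then with `δ = max{α,β}·ω` (the least additively closed ordinal strictly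
above both), the preimage under `f` of every set in `Σ⁰_{<δ}` is again in `Σ⁰_{<δ}`. -/
theorem sigma_measurable_below_delta {X Y : Type*} [TopologicalSpace X]
    [TopologicalSpace Y] (α β : Ordinal) (hα : 1 ≤ α) (hβ : 1 ≤ β)
    (hα1 : α < ω_ 1) (hβ1 : β < ω_ 1) (f : X → Y)
    (hf : ∀ A : Set Y, SigmaLev β A → SigmaLev α (f ⁻¹' A)) :
    ∀ γ < max α β * ω, ∀ A : Set Y, SigmaLev γ A →
      ∃ γ' < max α β * ω, SigmaLev γ' (f ⁻¹' A) :=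
  sigma_measurable_below_delta_general α β hα hβ f hf
end

section
/- Let X and Y be compact Hausdorff Polish spaces of the same Fréchet dimension type (each homeomorphic to a subspace of the other). Then there are countable partitions ⟨X_n⟩ and ⟨Y_n⟩ of X and Y into Δ⁰₂ pieces such that X_n is homeomorphic to Y_n for every n. -/
/-- A `Δ⁰₂` set: simultaneously a countable union of closed sets and a countable
intersection of open sets. -/
def IsDelta02 {X : Type*} [TopologicalSpace X] (S : Set X) : Prop :=
  (∃ F : ℕ → Set X, (∀ n, IsClosed (F n)) ∧ S = ⋃ n, F n) ∧
  (∃ U : ℕ → Set X, (∀ n, IsOpen (U n)) ∧ S = ⋂ n, U n)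

/-!
Schröder–Bernstein with closed sets. Put `X₀ = X`, `Y₀ = Y`, `Xₙ₊₁ = g(Yₙ)`, `Yₙ₊₁ = f(Xₙ)`.
Both chains decrease, and by compactness every `Xₙ`, `Yₙ` is closed, so the pieces
`⋂ Xₙ` and `Xₙ \ Xₙ₊₁` (and likewise in `Y`) are differences of closed sets, hence `Δ⁰₂` in a
metrizable space. The embedding `f` maps `Xₙ \ Xₙ₊₁` onto `Yₙ₊₁ \ Yₙ₊₂` and, being injective,
`⋂ Xₙ` onto `⋂ Yₙ`; `g` maps `Yₙ \ Yₙ₊₁` onto `Xₙ₊₁ \ Xₙ₊₂`. Using `f` on the even-indexed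
differences and `g` on the odd-indexed ones matches the pieces of `X` with those of `Y`.
-/

open Set Function Topology

lemma IsClosed.isDelta02_diff {X : Type*} [TopologicalSpace X] [PerfectlyNormalSpace X]
    {C D : Set X} (hC : IsClosed C) (hD : IsClosed D) : IsDelta02 (C \ D) := by
  obtain ⟨U, hU, rfl⟩ := hC.isGδ.eq_iInter_nat
  obtain ⟨V, hV, rfl⟩ := hD.isGδ.eq_iInter_nat
  refine ⟨⟨fun n => (⋂ m, U m) ∩ (V n)ᶜ, fun n => hC.inter (hV n).isClosed_compl, ?_⟩,
    ⟨fun n => U n ∩ (⋂ m, V m)ᶜ, fun n => (hU n).inter hD.isOpen_compl, ?_⟩⟩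
  · rw [sdiff_eq, compl_iInter, inter_iUnion]
  · rw [sdiff_eq, iInter_inter]

lemma IsClosed.isDelta02 {X : Type*} [TopologicalSpace X] [PerfectlyNormalSpace X]
    {C : Set X} (hC : IsClosed C) : IsDelta02 C := by
  simpa using hC.isDelta02_diff isClosed_empty

lemma Topology.IsEmbedding.nonempty_homeomorph_of_image_eq {X Y : Type*} [TopologicalSpace X]
    [TopologicalSpace Y] {f : X → Y} (hf : IsEmbedding f) {S : Set X} {T : Set Y}
    (h : f '' S = T) : Nonempty (S ≃ₜ T) :=
  ⟨(hf.homeomorphImage S).trans (.setCongr h)⟩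

section ChainPieces

variable {X Y : Type*}

def chainPieces (C : ℕ → Set X) : ℕ → Set X
  | 0 => ⋂ m, C m
  | n + 1 => C n \ C (n + 1)

variable {C : ℕ → Set X}

lemma pairwise_disjoint_chainPieces (hC : Antitone C) :
    Pairwise (Disjoint on chainPieces C) := by
  refine (pairwise_disjoint_on _).2 fun i j hij => ?_
  obtain ⟨j, rfl⟩ := Nat.exists_eq_add_one_of_ne_zero (Nat.ne_zero_of_lt hij)
  cases i with
  | zero => exact disjoint_left.2 fun x hx hx' => hx'.2 (mem_iInter.1 hx (j + 1))
  | succ i => exact disjoint_left.2 fun x hx hx' => hx.2 (hC (by omega) hx'.1)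

lemma iUnion_chainPieces (hC : C 0 = univ) : ⋃ n, chainPieces C n = univ := by
  refine eq_univ_of_forall fun x => by_contra fun hx => ?_
  simp only [mem_iUnion, not_exists] at hx
  have hmem : ∀ n, x ∈ C n := fun n => by
    induction n with
    | zero => simp [hC]
    | succ n ih => exact by_contra fun h => hx (n + 1) ⟨ih, h⟩
  exact hx 0 (mem_iInter.2 hmem)

lemma isDelta02_chainPieces [TopologicalSpace X] [PerfectlyNormalSpace X]
    (hC : ∀ n, IsClosed (C n)) : ∀ n, IsDelta02 (chainPieces C n)
  | 0 => (isClosed_iInter hC).isDelta02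
  | n + 1 => (hC n).isDelta02_diff (hC (n + 1))

variable {D : ℕ → Set Y} {f : X → Y}

lemma image_chainPieces_zero (hf : Injective f) (hD : Antitone D)
    (hfCD : ∀ n, f '' C n = D (n + 1)) : f '' chainPieces C 0 = chainPieces D 0 := by
  simp only [chainPieces, hf.injOn.image_iInter_eq, hfCD, hD.iInter_nat_add]

lemma image_chainPieces_succ (hf : Injective f) (hfCD : ∀ n, f '' C n = D (n + 1)) (n : ℕ) :
    f '' chainPieces C (n + 1) = chainPieces D (n + 2) := by
  simp only [chainPieces, image_sdiff hf, hfCD]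

end ChainPieces

section SchroederBernstein

variable {X Y : Type*}

def sbChain (f : X → Y) (g : Y → X) : ℕ → Set X × Set Y
  | 0 => (univ, univ)
  | n + 1 => (g '' (sbChain f g n).2, f '' (sbChain f g n).1)

lemma sbChain_succ_le (f : X → Y) (g : Y → X) (n : ℕ) : sbChain f g (n + 1) ≤ sbChain f g n := by
  induction n with
  | zero => exact ⟨subset_univ _, subset_univ _⟩
  | succ n ih => exact ⟨image_mono ih.2, image_mono ih.1⟩

lemma antitone_sbChain (f : X → Y) (g : Y → X) : Antitone (sbChain f g) :=
  antitone_nat_of_succ_le (sbChain_succ_le f g)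

lemma isCompact_sbChain [TopologicalSpace X] [TopologicalSpace Y] [CompactSpace X]
    [CompactSpace Y] {f : X → Y} {g : Y → X} (hf : Continuous f) (hg : Continuous g) :
    ∀ n, IsCompact (sbChain f g n).1 ∧ IsCompact (sbChain f g n).2
  | 0 => ⟨isCompact_univ, isCompact_univ⟩
  | n + 1 => ⟨(isCompact_sbChain hf hg n).2.image hg, (isCompact_sbChain hf hg n).1.image hf⟩

def swapOddWithSucc : ℕ → ℕ
  | 0 => 0
  | n + 1 => if Even n then n + 2 else n

@[simp]
lemma swapOddWithSucc_two_mul_add_one (k : ℕ) : swapOddWithSucc (2 * k + 1) = 2 * k + 2 := by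
  simp [swapOddWithSucc]

@[simp]
lemma swapOddWithSucc_two_mul_add_two (k : ℕ) : swapOddWithSucc (2 * k + 2) = 2 * k + 1 := by
  simp [swapOddWithSucc]

lemma swapOddWithSucc_involutive : Involutive swapOddWithSucc := by
  rintro (_ | n)
  · rfl
  · obtain ⟨k, rfl | rfl⟩ := Nat.even_or_odd' n <;> simp

lemma nonempty_homeomorph_chainPieces_sbChain [TopologicalSpace X] [TopologicalSpace Y]
    {f : X → Y} {g : Y → X} (hf : IsEmbedding f) (hg : IsEmbedding g) (n : ℕ) :
    Nonempty (chainPieces (fun k => (sbChain f g k).1) n ≃ₜ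
      chainPieces (fun k => (sbChain f g k).2) (swapOddWithSucc n)) := by
  set C : ℕ → Set X := fun k => (sbChain f g k).1
  set D : ℕ → Set Y := fun k => (sbChain f g k).2
  have hfCD : ∀ k, f '' C k = D (k + 1) := fun _ => rfl
  have hgDC : ∀ k, g '' D k = C (k + 1) := fun _ => rfl
  cases n with
  | zero =>
    exact hf.nonempty_homeomorph_of_image_eq <| image_chainPieces_zero hf.injective
      (monotone_snd.comp_antitone (antitone_sbChain f g)) hfCD
  | succ n =>
    obtain ⟨k, rfl | rfl⟩ := Nat.even_or_odd' n
    · rw [swapOddWithSucc_two_mul_add_one]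
      exact hf.nonempty_homeomorph_of_image_eq (image_chainPieces_succ hf.injective hfCD (2 * k))
    · rw [swapOddWithSucc_two_mul_add_two]
      exact (hg.nonempty_homeomorph_of_image_eq
        (image_chainPieces_succ hg.injective hgDC (2 * k))).map Homeomorph.symm

end SchroederBernstein

theorem compact_polish_same_frechet_type_pw_homeo_general {X Y : Type*}
    [TopologicalSpace X] [TopologicalSpace Y] [PolishSpace X] [PolishSpace Y]
    [CompactSpace X] [CompactSpace Y]
    (f : X → Y) (g : Y → X)
    (hf : Topology.IsEmbedding f) (hg : Topology.IsEmbedding g) :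
    ∃ (A : ℕ → Set X) (B : ℕ → Set Y),
      Pairwise (Function.onFun Disjoint A) ∧ (⋃ n, A n) = Set.univ ∧
      Pairwise (Function.onFun Disjoint B) ∧ (⋃ n, B n) = Set.univ ∧
      (∀ n, IsDelta02 (A n)) ∧ (∀ n, IsDelta02 (B n)) ∧
      ∀ n, Nonempty (↥(A n) ≃ₜ ↥(B n)) := by
  have hcompact := isCompact_sbChain hf.continuous hg.continuous
  have hσ := swapOddWithSucc_involutive
  refine ⟨chainPieces fun n => (sbChain f g n).1,
    chainPieces (fun n => (sbChain f g n).2) ∘ swapOddWithSucc,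
    pairwise_disjoint_chainPieces (monotone_fst.comp_antitone (antitone_sbChain f g)),
    iUnion_chainPieces rfl,
    (pairwise_disjoint_chainPieces
      (monotone_snd.comp_antitone (antitone_sbChain f g))).comp_of_injective hσ.injective,
    (hσ.surjective.iUnion_comp _).trans (iUnion_chainPieces rfl),
    isDelta02_chainPieces fun n => (hcompact n).1.isClosed,
    fun n => isDelta02_chainPieces (fun n => (hcompact n).2.isClosed) _,
    nonempty_homeomorph_chainPieces_sbChain hf hg⟩

/-- Two compact Hausdorff Polish spaces of the same Fréchet dimension type (each
embeds homeomorphically into the other) admit countable partitions into `Δ⁰₂` pieces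
which are pairwise homeomorphic. -/
theorem compact_polish_same_frechet_type_pw_homeo {X Y : Type*}
    [TopologicalSpace X] [TopologicalSpace Y] [PolishSpace X] [PolishSpace Y]
    [CompactSpace X] [CompactSpace Y] [T2Space X] [T2Space Y]
    (f : X → Y) (g : Y → X)
    (hf : Topology.IsEmbedding f) (hg : Topology.IsEmbedding g) :
    ∃ (A : ℕ → Set X) (B : ℕ → Set Y),
      Pairwise (Function.onFun Disjoint A) ∧ (⋃ n, A n) = Set.univ ∧
      Pairwise (Function.onFun Disjoint B) ∧ (⋃ n, B n) = Set.univ ∧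
      (∀ n, IsDelta02 (A n)) ∧ (∀ n, IsDelta02 (B n)) ∧
      ∀ n, Nonempty (↥(A n) ≃ₜ ↥(B n)) :=
  compact_polish_same_frechet_type_pw_homeo_general f g hf hg
end

section
/- Let (X, ≤) be the poset formed by the disjoint union over n ∈ ω of chains C_n = {cⁿ_n < ⋯ < cⁿ₀} (elements of distinct chains incomparable), together with an adjoined bottom element ⊥ below everything and a top element ⊤ above everything, with the Alexandrov topology of up-sets. Then for every monotone function f : X → X with f(⊤) ≠ ⊤ there is m ∈ ω such that the range of f is contained in C_m ∪ {⊥}, a set of size at most m+2 not containing ⊤; consequently f cannot reduce a set admitting an alternating chain of length m+3 to any set. -/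
/-- The poset formed by the disjoint union over `n ∈ ω` of chains
`C_n = {cⁿ_n < ⋯ < cⁿ₀}` (elements of distinct chains incomparable), with an adjoined
bottom element `⊥` and top element `⊤`. `el n i` denotes `cⁿ_i`. -/
inductive XS where
  | bot : XS
  | top : XS
  | el (n : ℕ) (i : Fin (n + 1)) : XS

namespace XS

/-- The order: `⊥` is below everything, `⊤` above everything, and within the chain
`C_n` we have `cⁿ_i ≤ cⁿ_j` iff `j ≤ i`. -/
def le : XS → XS → Prop
  | bot, _ => True
  | _, top => True
  | el n i, el m j => ∃ h : n = m, (h ▸ j : Fin (n + 1)) ≤ i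
  | _, _ => False

/-- The strict order. -/
def lt (x y : XS) : Prop := le x y ∧ x ≠ y

/-- An alternating chain of length `k` for `S`: a strictly increasing sequence
`a₀ < ⋯ < a_{k-1}` alternating in and out of `S`. -/
def AltChain (S : Set XS) (k : ℕ) (a : Fin k → XS) : Prop :=
  (∀ i j : Fin k, i < j → lt (a i) (a j)) ∧
  ∀ i : Fin k, ∀ h : (i : ℕ) + 1 < k, (a i ∈ S ↔ a ⟨(i : ℕ) + 1, h⟩ ∉ S)

/-- A rank function: `⊥` has rank 0, `cⁿ_i` has rank `n + 1 - i`. -/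
def rk : XS → ℕ
  | bot => 0
  | top => 0
  | el n i => n + 1 - i

lemma le_top (x : XS) : le x top := by cases x <;> trivial

lemma rk_lt {m : ℕ} {x y : XS}
    (hx : x = bot ∨ ∃ i : Fin (m + 1), x = el m i)
    (hy : y = bot ∨ ∃ i : Fin (m + 1), y = el m i)
    (hle : le x y) (hne : x ≠ y) : rk x < rk y := by
  rcases hx with rfl | ⟨i, rfl⟩
  · rcases hy with rfl | ⟨j, rfl⟩
    · exact absurd rfl hne
    · simp only [rk]
      omega
  · rcases hy with rfl | ⟨j, rfl⟩
    · exact absurd hle (by simp [le])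
    · obtain ⟨h, hji⟩ := hle
      simp only at hji
      have hji' : (j : ℕ) ≤ (i : ℕ) := hji
      have hne' : (i : ℕ) ≠ (j : ℕ) := by
        intro h
        exact hne (by rw [Fin.ext h])
      simp only [rk]
      omega

lemma rk_le {m : ℕ} {y : XS}
    (hy : y = bot ∨ ∃ i : Fin (m + 1), y = el m i) : rk y ≤ m + 1 := by
  rcases hy with rfl | ⟨i, rfl⟩ <;> simp [rk]

lemma main_aux (f : XS → XS) (hmono : ∀ a b : XS, le a b → le (f a) (f b))
    (m : ℕ) (key : ∀ x, f x = bot ∨ ∃ i : Fin (m + 1), f x = el m i) :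
    (Set.range f ⊆ insert bot {x : XS | ∃ i : Fin (m + 1), x = el m i}) ∧
      ∀ S T : Set XS, (∃ a : Fin (m + 3) → XS, AltChain S (m + 3) a) →
        S ≠ f ⁻¹' T := by
  constructor
  · rintro x ⟨y, rfl⟩
    rcases key y with h | ⟨i, h⟩
    · exact Or.inl h
    · exact Or.inr ⟨i, h⟩
  · rintro S T ⟨a, hstrict, halt⟩ rfl
    have step : ∀ k : ℕ, ∀ h : k + 1 < m + 3,
        rk (f (a ⟨k, by omega⟩)) < rk (f (a ⟨k + 1, h⟩)) := by
      intro k h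
      have hlt := hstrict ⟨k, by omega⟩ ⟨k + 1, h⟩ (by simp [Fin.lt_def])
      have hle := hmono _ _ hlt.1
      have hne : f (a ⟨k, by omega⟩) ≠ f (a ⟨k + 1, h⟩) := by
        have := halt ⟨k, by omega⟩ h
        simp only [Set.mem_preimage] at this
        intro heq
        rw [heq] at this
        tauto
      exact rk_lt (key _) (key _) hle hne
    have grow : ∀ k : ℕ, ∀ h : k < m + 3, k ≤ rk (f (a ⟨k, h⟩)) := by
      intro k
      induction k with
      | zero => intro h; omega
      | succ n ih =>
        intro h
        have := ih (by omega)
        have := step n h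
        omega
    have h1 := grow (m + 2) (by omega)
    have h2 := rk_le (key (a ⟨m + 2, by omega⟩))
    omega

/-- Every monotone `f : X → X` with `f(⊤) ≠ ⊤` has range contained, for some `m`, in
`C_m ∪ {⊥}` — a set of size at most `m + 2` not containing `⊤`; consequently `f`
cannot reduce any set admitting an alternating chain of length `m + 3` to any set. -/
theorem monotone_not_top_range_small (f : XS → XS)
    (hmono : ∀ a b : XS, le a b → le (f a) (f b)) (htop : f top ≠ top) :
    ∃ m : ℕ, (Set.range f ⊆ insert bot {x : XS | ∃ i : Fin (m + 1), x = el m i}) ∧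
      ∀ S T : Set XS, (∃ a : Fin (m + 3) → XS, AltChain S (m + 3) a) →
        S ≠ f ⁻¹' T := by
  have hfx : ∀ x, le (f x) (f top) := fun x => hmono x top (le_top x)
  rcases hc : f top with _ | _ | ⟨n, j⟩
  · refine ⟨0, main_aux f hmono 0 ?_⟩
    intro x
    have := hfx x
    rw [hc] at this
    left
    cases hx : f x
    · rfl
    · rw [hx] at this; exact absurd this (by simp [le])
    · rw [hx] at this; exact absurd this (by simp [le])
  · exact absurd hc htop
  · refine ⟨n, main_aux f hmono n ?_⟩
    intro x
    have := hfx x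
    rw [hc] at this
    cases hx : f x with
    | bot => exact Or.inl rfl
    | top => rw [hx] at this; exact absurd this (by simp [le])
    | el p i =>
      rw [hx] at this
      obtain ⟨h, _⟩ := this
      subst h
      exact Or.inr ⟨i, rfl⟩

end XS
end

section
/- Let X be an uncountable quasi-Polish space. Then there is a continuous injection of the Cantor space 2^ω into X whose range is a Π⁰₂ subset of X. -/
/-- `d` is a complete quasi-metric on `X` compatible with its topology:
it is nonnegative, satisfies `d(x,y) = d(y,x) = 0 ↔ x = y` and the triangle
inequality, generates the topology of `X` via its open balls, and every
`d`-Cauchy sequence converges with respect to the symmetrized metric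
`d̂(x,y) = max{d(x,y), d(y,x)}`. -/
def IsCompleteQuasiMetric {X : Type*} [t : TopologicalSpace X] (d : X → X → ℝ) : Prop :=
  (∀ x y : X, 0 ≤ d x y) ∧
  (∀ x y : X, (d x y = 0 ∧ d y x = 0) ↔ x = y) ∧
  (∀ x y z : X, d x z ≤ d x y + d y z) ∧
  (t = TopologicalSpace.generateFrom
    {B : Set X | ∃ (x : X) (ε : ℝ), 0 < ε ∧ B = {y : X | d x y < ε}}) ∧
  (∀ u : ℕ → X,
    (∀ ε : ℝ, 0 < ε → ∃ N : ℕ, ∀ m n : ℕ, N ≤ m → m ≤ n → d (u m) (u n) < ε) →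
    ∃ x : X, ∀ ε : ℝ, 0 < ε → ∃ N : ℕ, ∀ n : ℕ, N ≤ n →
      max (d x (u n)) (d (u n) x) < ε)

/-- A quasi-Polish space: a countably based T₀ space admitting a compatible complete
quasi-metric. -/
def IsQuasiPolish (X : Type*) [TopologicalSpace X] : Prop :=
  SecondCountableTopology X ∧ T0Space X ∧ ∃ d : X → X → ℝ, IsCompleteQuasiMetric d

/-!
The symmetrization `d̂ = max d dᵀ` of a complete quasi-metric is a complete metric, and a
countable base of `X` yields a countable `d̂`-dense set, so `(X, d̂)` is Polish. The
Cantor–Bendixson theorem embeds `2^ω` into it with closed range `C`, and the identity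
`(X, d̂) → X` is continuous. Finally, the difference `{y | d c y < r} \ {y | r < d y c}` of two
`d`-open sets lies between the open and the closed `d̂`-ball of radius `r` about `c`, so every
`d̂`-open set, in particular `Cᶜ`, is a countable union of such differences: `C` is `Π⁰₂` in `X`.
-/

open Set Metric TopologicalSpace

namespace IsCompleteQuasiMetric

variable {X : Type*} [TopologicalSpace X] {d : X → X → ℝ}

theorem nonneg (hd : IsCompleteQuasiMetric d) (x y : X) : 0 ≤ d x y :=
  hd.1 x y

theorem self_eq_zero (hd : IsCompleteQuasiMetric d) (x : X) : d x x = 0 :=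
  ((hd.2.1 x x).2 rfl).1

theorem eq_of_eq_zero (hd : IsCompleteQuasiMetric d) {x y : X} (hxy : d x y = 0)
    (hyx : d y x = 0) : x = y :=
  (hd.2.1 x y).1 ⟨hxy, hyx⟩

theorem triangle (hd : IsCompleteQuasiMetric d) (x y z : X) : d x z ≤ d x y + d y z :=
  hd.2.2.1 x y z

theorem topology_eq (hd : IsCompleteQuasiMetric d) :
    ‹TopologicalSpace X› = generateFrom {B | ∃ (x : X) (ε : ℝ), 0 < ε ∧ B = {y | d x y < ε}} :=
  hd.2.2.2.1

theorem isOpen_setOf_lt (hd : IsCompleteQuasiMetric d) (x : X) {ε : ℝ} (hε : 0 < ε) :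
    IsOpen {y | d x y < ε} := by
  rw [hd.topology_eq]
  exact isOpen_generateFrom_of_mem ⟨x, ε, hε, rfl⟩

theorem isOpen_setOf_gt (hd : IsCompleteQuasiMetric d) (x : X) (r : ℝ) :
    IsOpen {y | r < d y x} := by
  refine isOpen_iff_forall_mem_open.2 fun y (hy : r < d y x) => ?_
  refine ⟨{w | d y w < d y x - r}, fun w (hw : d y w < d y x - r) => ?_,
    hd.isOpen_setOf_lt y (sub_pos.2 hy), ?_⟩
  · show r < d w x
    linarith [hd.triangle y w x]
  · simpa [hd.self_eq_zero] using hy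

theorem max_triangle (hd : IsCompleteQuasiMetric d) (x y z : X) :
    max (d x z) (d z x) ≤ max (d x y) (d y x) + max (d y z) (d z y) :=
  max_le
    (by linarith [hd.triangle x y z, le_max_left (d x y) (d y x), le_max_left (d y z) (d z y)])
    (by linarith [hd.triangle z y x, le_max_right (d x y) (d y x), le_max_right (d y z) (d z y)])

def Symm (_ : IsCompleteQuasiMetric d) : Type _ := X

def ofSymm (hd : IsCompleteQuasiMetric d) : hd.Symm ≃ X := Equiv.refl X

noncomputable instance (hd : IsCompleteQuasiMetric d) : MetricSpace hd.Symm where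
  dist a b := max (d (hd.ofSymm a) (hd.ofSymm b)) (d (hd.ofSymm b) (hd.ofSymm a))
  dist_self a := by rw [max_self, hd.self_eq_zero]
  dist_comm a b := max_comm _ _
  dist_triangle a b c := hd.max_triangle _ _ _
  eq_of_dist_eq_zero h := hd.ofSymm.injective <| hd.eq_of_eq_zero
    (((le_max_left _ _).trans h.le).antisymm (hd.nonneg _ _))
    (((le_max_right _ _).trans h.le).antisymm (hd.nonneg _ _))

theorem dist_eq (hd : IsCompleteQuasiMetric d) (a b : hd.Symm) :
    dist a b = max (d (hd.ofSymm a) (hd.ofSymm b)) (d (hd.ofSymm b) (hd.ofSymm a)) :=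
  rfl

theorem lipschitzWith_one_ofSymm (hd : IsCompleteQuasiMetric d) (x : X) :
    LipschitzWith 1 fun a : hd.Symm => d x (hd.ofSymm a) :=
  LipschitzWith.of_le_add fun _ b =>
    (hd.triangle _ (hd.ofSymm b) _).trans (add_le_add_right (le_max_right _ _) _)

theorem continuous_ofSymm (hd : IsCompleteQuasiMetric d) : Continuous hd.ofSymm := by
  rw [continuous_iff_coinduced_le]
  refine (le_generateFrom ?_).trans_eq hd.topology_eq.symm
  rintro _ ⟨x, ε, -, rfl⟩
  exact isOpen_coinduced.2 <|
    isOpen_lt (hd.lipschitzWith_one_ofSymm x).continuous continuous_const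

instance (hd : IsCompleteQuasiMetric d) [SecondCountableTopology X] :
    SecondCountableTopology hd.Symm := by
  refine secondCountable_of_almost_dense_set fun ε hε => ?_
  obtain ⟨b, hbc, -, hb⟩ := exists_countable_basis X
  let b' := {B ∈ b | ∃ c ∈ B, B ⊆ {y | d c y < ε}}
  have : Countable b' := (hbc.mono fun _ hB => hB.1).to_subtype
  choose c hcB hBc using fun B : b' => B.2.2
  refine ⟨range (hd.ofSymm.symm ∘ c), countable_range _, fun a => ?_⟩
  have ha : hd.ofSymm a ∈ {y | d (hd.ofSymm a) y < ε} := by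
    simpa only [mem_ofPred_eq, hd.self_eq_zero] using hε
  obtain ⟨B, hB, haB, hBa⟩ := hb.exists_subset_of_mem_open ha (hd.isOpen_setOf_lt _ hε)
  let B' : b' := ⟨B, hB, _, haB, hBa⟩
  refine ⟨_, mem_range_self B', ?_⟩
  rw [dist_eq, Function.comp_apply, Equiv.apply_symm_apply]
  exact max_le (hBa (hcB B')).le (hBc B' haB).le

instance (hd : IsCompleteQuasiMetric d) : CompleteSpace hd.Symm := by
  refine Metric.complete_of_cauchySeq_tendsto fun u hu => ?_
  rw [Metric.cauchySeq_iff] at hu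
  obtain ⟨x, hx⟩ := hd.2.2.2.2 (hd.ofSymm ∘ u) fun ε hε => by
    obtain ⟨N, hN⟩ := hu ε hε
    exact ⟨N, fun m n hm hmn => (le_max_left _ _).trans_lt (hN m hm n (hm.trans hmn))⟩
  refine ⟨hd.ofSymm.symm x, Metric.tendsto_atTop.2 fun ε hε => ?_⟩
  obtain ⟨N, hN⟩ := hx ε hε
  refine ⟨N, fun n hn => ?_⟩
  rw [dist_eq, Equiv.apply_symm_apply, max_comm]
  exact hN n hn

theorem ball_subset_preimage_diff (hd : IsCompleteQuasiMetric d) (a : hd.Symm) (r : ℝ) :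
    ball a r ⊆ hd.ofSymm ⁻¹' ({y | d (hd.ofSymm a) y < r} \ {y | r < d y (hd.ofSymm a)}) := by
  intro b hb
  rw [mem_ball, dist_comm, dist_eq] at hb
  exact ⟨(le_max_left _ _).trans_lt hb, not_lt.2 ((le_max_right _ _).trans hb.le)⟩

theorem preimage_diff_subset_closedBall (hd : IsCompleteQuasiMetric d) (a : hd.Symm) (r : ℝ) :
    hd.ofSymm ⁻¹' ({y | d (hd.ofSymm a) y < r} \ {y | r < d y (hd.ofSymm a)}) ⊆
      closedBall a r := by
  rintro b ⟨hlt, hle⟩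
  rw [mem_closedBall, dist_comm, dist_eq]
  exact max_le hlt.le (not_lt.1 hle)

theorem exists_preimage_iUnion_diff_eq_of_isOpen (hd : IsCompleteQuasiMetric d)
    [SeparableSpace hd.Symm] {O : Set hd.Symm} (hO : IsOpen O) :
    ∃ U V : ℕ → Set X, (∀ n, IsOpen (U n)) ∧ (∀ n, IsOpen (V n)) ∧
      hd.ofSymm ⁻¹' ⋃ n, U n \ V n = O := by
  rcases isEmpty_or_nonempty hd.Symm with _ | _
  · exact ⟨fun _ => ∅, fun _ => ∅, fun _ => isOpen_empty, fun _ => isOpen_empty,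
      Subsingleton.elim _ _⟩
  obtain ⟨u, hu⟩ := exists_dense_seq hd.Symm
  let r (n : ℕ) : ℝ := 1 / (n + 1)
  -- only the pieces whose closed `d̂`-ball lies in `O` are kept
  let U (i n : ℕ) : Set X :=
    {_y | closedBall (u i) (r n) ⊆ O} ∩ {y | d (hd.ofSymm (u i)) y < r n}
  let V (i n : ℕ) : Set X := {y | r n < d y (hd.ofSymm (u i))}
  have pieces_subset : ⋃ (i : ℕ) (n : ℕ), hd.ofSymm ⁻¹' (U i n \ V i n) ⊆ O :=
    iUnion₂_subset fun i n a ⟨⟨hO', haU⟩, haV⟩ =>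
      hO' (hd.preimage_diff_subset_closedBall (u i) (r n) ⟨haU, haV⟩)
  have subset_pieces : O ⊆ ⋃ (i : ℕ) (n : ℕ), hd.ofSymm ⁻¹' (U i n \ V i n) := by
    intro a ha
    obtain ⟨ε, hε, hball⟩ := Metric.isOpen_iff.1 hO a ha
    obtain ⟨n, hn⟩ := exists_nat_one_div_lt (half_pos hε)
    obtain ⟨i, hi⟩ := Metric.denseRange_iff.1 hu a (r n) Nat.one_div_pos_of_nat
    have hO' : closedBall (u i) (r n) ⊆ O :=
      (closedBall_subset_ball' (by rw [dist_comm]; linarith)).trans hball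
    obtain ⟨haU, haV⟩ := hd.ball_subset_preimage_diff (u i) (r n) hi
    exact mem_iUnion₂.2 ⟨i, n, ⟨hO', haU⟩, haV⟩
  refine ⟨fun k => U k.unpair.1 k.unpair.2, fun k => V k.unpair.1 k.unpair.2,
    fun k => isOpen_const.inter (hd.isOpen_setOf_lt _ Nat.one_div_pos_of_nat),
    fun k => hd.isOpen_setOf_gt _ _, ?_⟩
  rw [iUnion_unpair (fun i n => U i n \ V i n), preimage_iUnion₂]
  exact pieces_subset.antisymm subset_pieces

theorem exists_preimage_iInter_compl_union_eq_of_isClosed (hd : IsCompleteQuasiMetric d)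
    [SeparableSpace hd.Symm] {C : Set hd.Symm} (hC : IsClosed C) :
    ∃ U V : ℕ → Set X, (∀ n, IsOpen (U n)) ∧ (∀ n, IsOpen (V n)) ∧
      hd.ofSymm ⁻¹' ⋂ n, (U n)ᶜ ∪ V n = C := by
  obtain ⟨U, V, hU, hV, hUV⟩ := hd.exists_preimage_iUnion_diff_eq_of_isOpen hC.isOpen_compl
  refine ⟨U, V, hU, hV, ?_⟩
  rw [← compl_inj_iff, ← hUV, ← preimage_compl, compl_iInter]
  simp only [compl_union, compl_compl, sdiff_eq]

end IsCompleteQuasiMetric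

/-- In an uncountable quasi-Polish space there is a continuous injection of the Cantor
space whose range is a `Π⁰₂` set (a countable intersection of sets of the form
(complement of an open set) ∪ (open set)). -/
theorem cantor_into_uncountable_quasiPolish {X : Type*} [TopologicalSpace X]
    (hqp : IsQuasiPolish X) (hunc : ¬ Countable X) :
    ∃ φ : (ℕ → Bool) → X, Continuous φ ∧ Function.Injective φ ∧
      ∃ U V : ℕ → Set X, (∀ n, IsOpen (U n)) ∧ (∀ n, IsOpen (V n)) ∧
        Set.range φ = ⋂ n, ((U n)ᶜ ∪ V n) := by
  obtain ⟨_, -, d, hd⟩ := hqp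
  have hunc' : ¬ (univ : Set hd.Symm).Countable := by
    rwa [countable_univ_iff, hd.ofSymm.countable_iff]
  obtain ⟨f, -, hf, hinj⟩ := isClosed_univ.exists_nat_bool_injection_of_not_countable hunc'
  obtain ⟨U, V, hU, hV, hUV⟩ :=
    hd.exists_preimage_iInter_compl_union_eq_of_isClosed (isCompact_range hf).isClosed
  refine ⟨hd.ofSymm ∘ f, hd.continuous_ofSymm.comp hf, hd.ofSymm.injective.comp hinj,
    U, V, hU, hV, ?_⟩
  rw [range_comp, ← hUV, Equiv.image_preimage]
end
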